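/- arXiv:1804.08855 — 4 statements merged into one kernel-verified Lean document; each statement's English description precedes it below -/
import Mathlib

section
/- Let R and S be binary relations on a set A. If the relation R* ∘ S is well-founded and R is well-founded, then R ∪ S is well-founded. -/
/-- A relation `r` terminates iff there is no infinite sequence of `r`-steps. -/
def Terminates {α : Type*} (r : α → α → Prop) : Prop :=
  WellFounded (fun a b => r b a)

/-- If `R* ∘ S` is well-founded and `R` is well-founded, then `R ∪ S` is
well-founded. -/
theorem union_terminates_of_chain {α : Type*} (R S : α → α → Prop)
    (hchain : Terminates (fun x z => ∃ y, Relation.ReflTransGen R x y ∧ S y z))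
    (hR : Terminates R) :
    Terminates (fun x y => R x y ∨ S x y) := by
  have inner : ∀ a, Acc (fun x y => R y x) a →
      (∀ z, (∃ y, Relation.ReflTransGen R a y ∧ S y z) →
        Acc (fun x y => R y x ∨ S y x) z) →
      Acc (fun x y => R y x ∨ S y x) a := by
    intro a hacc
    induction hacc with
    | intro a _ ihr =>
      intro hz
      constructor
      intro b hb
      rcases hb with h | h
      · exact ihr b h (fun z hzz => by
          obtain ⟨y, hy, hs⟩ := hzz
          exact hz z ⟨y, Relation.ReflTransGen.head h hy, hs⟩)
      · exact hz b ⟨a, Relation.ReflTransGen.refl, h⟩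
  refine ⟨fun a => ?_⟩
  induction hchain.apply a with
  | intro a _ ihc => exact inner a (hR.apply a) ihc
end

section
/- Let → be a binary relation on a set of terms and let →ᵢ ⊆ → and →ₜ ⊆ → be two subrelations with → = →ᵢ ∪ →ₜ (internal and top steps). If the chain relation →ch = →ᵢ* ∘ →ₜ is well-founded and →ᵢ is well-founded, then → is well-founded. -/
/-- If a rewrite relation `→` decomposes as internal steps `→ᵢ` and top steps
`→ₜ`, the chain relation `→ᵢ* ∘ →ₜ` is well-founded, and `→ᵢ` is well-founded,
then `→` is well-founded. -/
theorem rewrite_terminates_of_chain {α : Type*} (step stepI stepT : α → α → Prop)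
    (hI : ∀ x y, stepI x y → step x y)
    (hT : ∀ x y, stepT x y → step x y)
    (hdecomp : ∀ x y, step x y ↔ stepI x y ∨ stepT x y)
    (hchain : Terminates (fun x z => ∃ y, Relation.ReflTransGen stepI x y ∧ stepT y z))
    (hwfI : Terminates stepI) :
    Terminates step := by
  have key : ∀ x, Acc (fun a b => ∃ y, Relation.ReflTransGen stepI b y ∧ stepT y a) x →
      ∀ z, Acc (fun a b => stepI b a) z → Relation.ReflTransGen stepI x z →
      Acc (fun a b => step b a) z := by
    intro x hc
    induction hc with
    | intro x hcx ihc =>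
      intro z hz
      induction hz with
      | intro z hzacc ihz =>
        intro hxz
        constructor
        intro w hw
        rcases (hdecomp z w).1 hw with h | h
        · exact ihz w h (hxz.tail h)
        · exact ihc w ⟨z, hxz, h⟩ w (hwfI.apply w) Relation.ReflTransGen.refl
  constructor
  intro a
  exact key a (hchain.apply a) a (hwfI.apply a) Relation.ReflTransGen.refl
end

section
/- Let (>, ≥) satisfy: > well-founded, ≥ reflexive transitive, ≥ ∘ > ⊆ >. Let R and D be relations with R ⊆ ≥ and D ⊆ >. Then R* ∘ D is well-founded. -/
/-- Reduction-pair criterion: if `>` is well-founded, `≥` is reflexive and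
transitive, `≥ ∘ > ⊆ >`, all rewrite steps `R` are in `≥` and all dependency
pairs `D` are in `>`, then the chain relation `R* ∘ D` is well-founded. -/
theorem reduction_pair_criterion {α : Type*} (gt ge R D : α → α → Prop)
    (hwf : Terminates gt) (hrefl : Reflexive ge) (htrans : Transitive ge)
    (hcompat : ∀ x y z, ge x y → gt y z → gt x z)
    (hR : ∀ x y, R x y → ge x y) (hD : ∀ x y, D x y → gt x y) :
    Terminates (fun x z => ∃ y, Relation.ReflTransGen R x y ∧ D y z) := by
  apply Subrelation.wf (r := fun a b => gt b a) ?_ hwf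
  rintro a b ⟨y, hxy, hD'⟩
  have hge : ge b y := by
    clear hD'
    induction hxy with
    | refl => exact hrefl b
    | tail _ h ih => exact htrans ih (hR _ _ h)
  exact hcompat _ _ _ hge (hD _ _ hD')
end

section
/- Let → be a relation on terms closed under the operation t ↦ f t₁…t…tₙ (placing a term as an argument of a symbol application). If the chain relation →ch satisfies →ch ⊆ →⁺ ∘ ⊵ (rewrite steps followed by the subterm relation), and → ∪ ⊳ is well-founded on a term t, then →ch is well-founded on t. -/
/-! Every chain step `x →ch y` is a nonempty `(→ ∪ ⊳)`-path from `x` to `y`, and a relation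
terminates from `t` as soon as its transitive closure does. -/

/-- Accessibility below a point: the relation `r` (read `r x y` as a step from
`x` to `y`) terminates from `t` iff `t` is accessible for the flipped relation. -/
def TerminatesOn {α : Type*} (r : α → α → Prop) (t : α) : Prop :=
  Acc (fun a b => r b a) t

namespace TerminatesOn

variable {α : Type*} {r s : α → α → Prop} {t : α}

theorem transGen (h : TerminatesOn r t) : TerminatesOn (Relation.TransGen r) t :=
  Subrelation.accessible Relation.transGen_swap.mpr (Acc.transGen h)

theorem of_forall_transGen (hrs : ∀ x y, r x y → Relation.TransGen s x y)
    (h : TerminatesOn s t) : TerminatesOn r t :=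
  Subrelation.accessible (hrs _ _) h.transGen

end TerminatesOn

/-- Abstract form: if every chain step is some rewrite steps followed by the
(reflexive) subterm relation (`ch ⊆ →⁺ ∘ ⊵`), and `→ ∪ ⊳` terminates from `t`,
then the chain relation terminates from `t`.  Here `sub x y` means `x ⊳ y`,
i.e. `y` is a strict subterm of `x`. -/
theorem chain_terminatesOn {α : Type*} (step sub ch : α → α → Prop)
    (hch : ∀ x y, ch x y → ∃ z, Relation.TransGen step x z ∧ (z = y ∨ sub z y))
    (t : α) (ht : TerminatesOn (fun x y => step x y ∨ sub x y) t) :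
    TerminatesOn ch t := by
  refine ht.of_forall_transGen fun x y hxy => ?_
  obtain ⟨z, hxz, hzy⟩ := hch x y hxy
  have hxz' : Relation.TransGen (fun x y => step x y ∨ sub x y) x z :=
    Relation.TransGen.mono (fun _ _ => Or.inl) _ _ hxz
  rcases hzy with rfl | hzy
  · exact hxz'
  · exact hxz'.tail (Or.inr hzy)
end
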